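/- arXiv:1409.8547 — 2 statements merged into one kernel-verified Lean document; each statement's English description precedes it below -/
import Mathlib

section
/- Let f: ℝ^n → ℝ be convex and differentiable, ρ: ℝ^n → ℝ convex with all subgradients bounded in norm by B ≥ 0, and λ ≥ 0. Suppose f satisfies f(y) ≤ f(ȳ) + ⟨∇f(ȳ), y - ȳ⟩ + (L/2)‖y - ȳ‖₂² for all y, ȳ and some L > 0. If x̄ satisfies λρ(x̄) + f(x̄) - min_x {λρ(x) + f(x)} ≤ α for some α ≥ 0, then ‖∇f(x̄)‖₂ ≤ √(2Lα) + λB. -/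
/-!
Move from `x̄` a distance `s ≥ 0` against the gradient `g = ∇f(x̄)`. The quadratic upper bound
lowers `f` by at least `s‖g‖ - Ls²/2`, while `ρ` is `B`-Lipschitz (a subgradient at the new
point, which exists by Hahn–Banach separation from the open strict epigraph, has norm `≤ B`)
and so rises by at most `Bs`. Suboptimality of `x̄` then gives
`s(‖g‖ - λB) ≤ α + Ls²/2` for every `s ≥ 0`, and `s = (‖g‖ - λB)/L` yields
`(‖g‖ - λB)² ≤ 2Lα`.
-/

open RealInnerProductSpace Set

theorem ConvexOn.exists_strongDual_add_apply_sub_le {E : Type*} [NormedAddCommGroup E]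
    [NormedSpace ℝ E] {ρ : E → ℝ} (hρ : ConvexOn ℝ univ ρ) (hc : Continuous ρ) (y : E) :
    ∃ φ : StrongDual ℝ E, ∀ z, ρ y + φ (z - y) ≤ ρ z := by
  have hS_open : IsOpen {p : E × ℝ | p.1 ∈ univ ∧ ρ p.1 < p.2} := by
    simpa using isOpen_lt (hc.comp continuous_fst) continuous_snd
  obtain ⟨F, hF⟩ := geometric_hahn_banach_open_point hρ.convex_strict_epigraph hS_open
    (x := (y, ρ y)) (by simp)
  set ℓ := F.comp (ContinuousLinearMap.inl ℝ E ℝ)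
  set c := F (0, 1)
  have hF_apply : ∀ z t, F (z, t) = ℓ z + t * c := by
    intro z t
    rw [← F.comp_inl_add_comp_inr (z, t)]
    simpa [ℓ, c] using F.map_smul t ((0 : E), (1 : ℝ))
  have hc_neg : c < 0 := by
    have := hF (y, ρ y + 1) (by simp)
    rw [hF_apply, hF_apply] at this
    linarith
  have hsupport : ∀ z, ℓ z + ρ z * c ≤ ℓ y + ρ y * c := by
    intro z
    refine le_of_forall_pos_lt_add fun ε hε => ?_
    have := hF (z, ρ z + ε / -c) ⟨trivial, by simpa using div_pos hε (neg_pos.mpr hc_neg)⟩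
    rw [hF_apply, hF_apply, add_mul, div_mul_eq_mul_div, div_neg,
      mul_div_cancel_right₀ _ hc_neg.ne] at this
    linarith
  refine ⟨(-c)⁻¹ • ℓ, fun z => ?_⟩
  have hφ : ((-c)⁻¹ • ℓ) (z - y) = (ℓ z - ℓ y) / -c := by
    simp [div_eq_inv_mul]
  rw [hφ, ← le_sub_iff_add_le', div_le_iff₀ (neg_pos.mpr hc_neg)]
  linarith [hsupport z]

theorem ConvexOn.exists_subgradient {E : Type*} [NormedAddCommGroup E] [InnerProductSpace ℝ E]
    [FiniteDimensional ℝ E] {ρ : E → ℝ} (hρ : ConvexOn ℝ univ ρ) (y : E) :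
    ∃ q : E, ∀ z, ρ y + ⟪q, z - y⟫ ≤ ρ z := by
  obtain ⟨φ, hφ⟩ := hρ.exists_strongDual_add_apply_sub_le
    (continuousOn_univ.mp (hρ.continuousOn isOpen_univ)) y
  exact ⟨(InnerProductSpace.toDual ℝ E).symm φ, fun z => by
    simpa only [InnerProductSpace.toDual_symm_apply] using hφ z⟩

theorem ConvexOn.le_add_mul_norm_sub_of_forall_subgradient_norm_le {E : Type*}
    [NormedAddCommGroup E] [InnerProductSpace ℝ E] [FiniteDimensional ℝ E] {ρ : E → ℝ}
    (hρ : ConvexOn ℝ univ ρ) {B : ℝ}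
    (hsub : ∀ x q : E, (∀ y, ρ x + ⟪q, y - x⟫ ≤ ρ y) → ‖q‖ ≤ B) (x y : E) :
    ρ x ≤ ρ y + B * ‖x - y‖ := by
  obtain ⟨q, hq⟩ := hρ.exists_subgradient x
  have hinner : -⟪q, y - x⟫ ≤ B * ‖x - y‖ := by
    rw [← inner_neg_right, neg_sub]
    exact (real_inner_le_norm q (x - y)).trans
      (mul_le_mul_of_nonneg_right (hsub x q hq) (norm_nonneg _))
  linarith [hq y]

theorem le_sqrt_of_forall_mul_le_add_sq {a α L : ℝ} (hL : 0 < L)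
    (h : ∀ s, 0 ≤ s → s * a ≤ α + L / 2 * s ^ 2) : a ≤ √(2 * L * α) := by
  rcases le_or_gt a 0 with ha | ha
  · exact ha.trans (Real.sqrt_nonneg _)
  rw [Real.le_sqrt' ha]
  have := h (a / L) (by positivity)
  field_simp at this
  nlinarith

theorem stmt_1_general (n : ℕ) (f ρ : EuclideanSpace ℝ (Fin n) → ℝ)
    (f' : EuclideanSpace ℝ (Fin n) → EuclideanSpace ℝ (Fin n))
    (hρconv : ConvexOn ℝ Set.univ ρ)
    (B : ℝ) (hB : 0 ≤ B)
    (hsub : ∀ x q : EuclideanSpace ℝ (Fin n),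
      (∀ y, ρ x + ⟪q, y - x⟫ ≤ ρ y) → ‖q‖ ≤ B)
    (L : ℝ) (hL : 0 < L)
    (hquad : ∀ y ybar : EuclideanSpace ℝ (Fin n),
      f y ≤ f ybar + ⟪f' ybar, y - ybar⟫ + L / 2 * ‖y - ybar‖ ^ 2)
    (lam : ℝ) (hlam : 0 ≤ lam) (α : ℝ)
    (xbar : EuclideanSpace ℝ (Fin n))
    (hsubopt : ∀ x, lam * ρ xbar + f xbar ≤ lam * ρ x + f x + α) :
    ‖f' xbar‖ ≤ Real.sqrt (2 * L * α) + lam * B := by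
  set g := f' xbar
  rcases eq_or_ne g 0 with hg | hg
  · rw [hg, norm_zero]
    positivity
  set u := ‖g‖⁻¹ • g
  have hu : ‖u‖ = 1 := by
    rw [norm_smul, norm_inv, norm_norm, inv_mul_cancel₀ (norm_ne_zero_iff.mpr hg)]
  have hstep : ∀ s, 0 ≤ s → s * (‖g‖ - lam * B) ≤ α + L / 2 * s ^ 2 := by
    intro s hs
    have hdisp : (xbar - s • u) - xbar = -(s • u) := sub_sub_cancel_left _ _
    have hdist : ‖(xbar - s • u) - xbar‖ = s := by
      rw [hdisp, norm_neg, norm_smul, hu, Real.norm_of_nonneg hs, mul_one]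
    have hinner : ⟪g, (xbar - s • u) - xbar⟫ = -(s * ‖g‖) := by
      rw [hdisp, inner_neg_right, real_inner_smul_right, real_inner_smul_right,
        real_inner_self_eq_norm_sq]
      field_simp
    have hf := hquad (xbar - s • u) xbar
    have hρ := hρconv.le_add_mul_norm_sub_of_forall_subgradient_norm_le hsub (xbar - s • u) xbar
    rw [hinner, hdist] at hf
    rw [hdist] at hρ
    nlinarith [hsubopt (xbar - s • u), mul_le_mul_of_nonneg_left hρ hlam]
  linarith [le_sqrt_of_forall_mul_le_add_sq hL hstep]

/-- Single-block case of Lemma 1: if x̄ is α-suboptimal for min λρ + f, where f has an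
L-quadratic upper bound and all subgradients of the convex ρ are bounded by B, then
‖∇f(x̄)‖ ≤ √(2Lα) + λB. -/
theorem stmt_1 (n : ℕ) (f ρ : EuclideanSpace ℝ (Fin n) → ℝ)
    (f' : EuclideanSpace ℝ (Fin n) → EuclideanSpace ℝ (Fin n))
    (hf' : ∀ x, HasGradientAt f (f' x) x)
    (hfconv : ConvexOn ℝ Set.univ f) (hρconv : ConvexOn ℝ Set.univ ρ)
    (B : ℝ) (hB : 0 ≤ B)
    (hsub : ∀ x q : EuclideanSpace ℝ (Fin n),
      (∀ y, ρ x + ⟪q, y - x⟫ ≤ ρ y) → ‖q‖ ≤ B)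
    (L : ℝ) (hL : 0 < L)
    (hquad : ∀ y ybar : EuclideanSpace ℝ (Fin n),
      f y ≤ f ybar + ⟪f' ybar, y - ybar⟫ + L / 2 * ‖y - ybar‖ ^ 2)
    (lam : ℝ) (hlam : 0 ≤ lam) (α : ℝ) (hα : 0 ≤ α)
    (xbar : EuclideanSpace ℝ (Fin n))
    (hsubopt : ∀ x, lam * ρ xbar + f xbar ≤ lam * ρ x + f x + α) :
    ‖f' xbar‖ ≤ Real.sqrt (2 * L * α) + lam * B :=
  stmt_1_general n f ρ f' hρconv B hB hsub L hL hquad lam hlam α xbar hsubopt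
end

section
/- Let ρ(x) = β₁‖x‖₁ + β₂‖x‖₂ on ℝ^n with β₁, β₂ > 0. For t > 0 and x̄ ∈ ℝ^n, the proximal map x^p = prox_{tρ}(x̄) is given by x^p = η · max{1 - tβ₂/‖η‖₂, 0}, where η = sgn(x̄) ⊙ max{|x̄| - tβ₁, 0} (componentwise), with the convention x^p = 0 when η = 0. That is, the prox of the sum equals the block soft-threshold applied after the componentwise soft-threshold. -/
open scoped RealInnerProductSpace

/-! Both summands of `ρ` have explicit subgradients at the candidate `xᵖ`: the residual
`x̄ - η` of the componentwise soft-threshold is `tβ₁` times an `ℓ¹`-subgradient, and the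
residual `η - xᵖ` of the block soft-threshold is `tβ₂` times an `ℓ²`-subgradient. These
residuals add up to `x̄ - xᵖ`, which is the optimality condition; expanding the quadratic term
of the objective `F` then gives `F(xᵖ) + ½‖y - xᵖ‖² ≤ F(y)` for every `y`, hence minimality
and uniqueness at once. -/

noncomputable def softThreshold (τ a : ℝ) : ℝ := Real.sign a * max (|a| - τ) 0

/-- At `η = 0` this is `0` (there `b / ‖η‖ = 0`), matching the paper's convention. -/
noncomputable def blockSoftThreshold {E : Type*} [NormedAddCommGroup E] [InnerProductSpace ℝ E]
    (b : ℝ) (η : E) : E :=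
  max (1 - b / ‖η‖) 0 • η

section SoftThreshold

variable {τ : ℝ}

lemma abs_sub_softThreshold_le (hτ : 0 ≤ τ) (a : ℝ) : |a - softThreshold τ a| ≤ τ := by
  unfold softThreshold
  rcases lt_trichotomy a 0 with ha | rfl | ha
  · rw [Real.sign_of_neg ha, abs_of_neg ha, abs_le]
    constructor <;> rcases max_cases (-a - τ) 0 with ⟨h, h'⟩ | ⟨h, h'⟩ <;> linarith
  · simpa using hτ
  · rw [Real.sign_of_pos ha, abs_of_pos ha, abs_le]
    constructor <;> rcases max_cases (a - τ) 0 with ⟨h, h'⟩ | ⟨h, h'⟩ <;> linarith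

lemma sub_softThreshold_mul_softThreshold (τ a : ℝ) :
    (a - softThreshold τ a) * softThreshold τ a = τ * |softThreshold τ a| := by
  unfold softThreshold
  rcases lt_trichotomy a 0 with ha | rfl | ha
  · rw [Real.sign_of_neg ha, abs_of_neg ha]
    rcases max_cases (-a - τ) 0 with ⟨h, h'⟩ | ⟨h, -⟩ <;> rw [h]
    · rw [abs_of_nonpos (by linarith)]; ring
    · simp
  · simp
  · rw [Real.sign_of_pos ha, abs_of_pos ha]
    rcases max_cases (a - τ) 0 with ⟨h, h'⟩ | ⟨h, -⟩ <;> rw [h]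
    · rw [abs_of_nonneg (by linarith)]; ring
    · simp

end SoftThreshold

section BlockSoftThreshold

variable {E : Type*} [NormedAddCommGroup E] [InnerProductSpace ℝ E]

@[simp]
lemma blockSoftThreshold_zero (b : ℝ) : blockSoftThreshold b (0 : E) = 0 :=
  smul_zero _

lemma norm_sub_blockSoftThreshold_le {b : ℝ} (hb : 0 ≤ b) (η : E) :
    ‖η - blockSoftThreshold b η‖ ≤ b := by
  unfold blockSoftThreshold
  rcases eq_or_ne η 0 with rfl | hη
  · simpa using hb
  have hη' : 0 < ‖η‖ := norm_pos_iff.2 hη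
  rcases le_total ‖η‖ b with h | h
  · rw [max_eq_right (by rw [sub_nonpos, le_div_iff₀ hη']; linarith)]
    simpa using h
  · rw [max_eq_left (by rw [sub_nonneg, div_le_one hη']; exact h), sub_smul, one_smul,
      sub_sub_cancel, norm_smul, Real.norm_of_nonneg (by positivity), div_mul_cancel₀ _ hη'.ne']

lemma inner_sub_blockSoftThreshold (b : ℝ) (η : E) :
    ⟪η - blockSoftThreshold b η, blockSoftThreshold b η⟫ = b * ‖blockSoftThreshold b η‖ := by
  unfold blockSoftThreshold
  rcases eq_or_ne η 0 with rfl | hη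
  · simp
  have hη' : 0 < ‖η‖ := norm_pos_iff.2 hη
  rcases le_total (1 - b / ‖η‖) 0 with h | h
  · simp [max_eq_right h]
  · have hres : η - (1 - b / ‖η‖) • η = (b / ‖η‖) • η := by module
    rw [max_eq_left h, hres, real_inner_smul_left, real_inner_smul_right,
      real_inner_self_eq_norm_sq, norm_smul, Real.norm_of_nonneg h]
    field_simp

end BlockSoftThreshold

section Subgradient

variable {ι : Type*} [Fintype ι]

lemma inner_sub_le_mul_sum_abs_sub {a : ℝ} {p x : EuclideanSpace ℝ ι} (hp : ∀ j, |p j| ≤ a)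
    (hpx : ∀ j, p j * x j = a * |x j|) (y : EuclideanSpace ℝ ι) :
    ⟪p, y - x⟫ ≤ a * ∑ j, |y j| - a * ∑ j, |x j| := by
  rw [PiLp.inner_apply, Finset.mul_sum, Finset.mul_sum, ← Finset.sum_sub_distrib]
  gcongr with j
  have hpy : p j * y j ≤ a * |y j| :=
    (le_abs_self _).trans
      ((abs_mul _ _).trans_le (mul_le_mul_of_nonneg_right (hp j) (abs_nonneg _)))
  simp only [PiLp.sub_apply, Real.inner_apply]
  linarith [hpx j]

lemma inner_sub_le_mul_norm_sub {E : Type*} [NormedAddCommGroup E] [InnerProductSpace ℝ E]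
    {b : ℝ} {q x : E} (hq : ‖q‖ ≤ b) (hqx : ⟪q, x⟫ = b * ‖x‖) (y : E) :
    ⟪q, y - x⟫ ≤ b * ‖y‖ - b * ‖x‖ := by
  rw [inner_sub_right, hqx]
  linarith [real_inner_le_norm q y, mul_le_mul_of_nonneg_right hq (norm_nonneg y)]

theorem add_half_norm_sub_sq_le_of_subgradients {a b : ℝ} {xbar x p q : EuclideanSpace ℝ ι}
    (hp : ∀ j, |p j| ≤ a) (hpx : ∀ j, p j * x j = a * |x j|) (hq : ‖q‖ ≤ b)
    (hqx : ⟪q, x⟫ = b * ‖x‖) (hx : xbar - x = p + q) (y : EuclideanSpace ℝ ι) :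
    a * ∑ j, |x j| + b * ‖x‖ + 1 / 2 * ‖x - xbar‖ ^ 2 + 1 / 2 * ‖y - x‖ ^ 2 ≤
      a * ∑ j, |y j| + b * ‖y‖ + 1 / 2 * ‖y - xbar‖ ^ 2 := by
  have hexpand : ‖y - xbar‖ ^ 2 = ‖x - xbar‖ ^ 2 + 2 * ⟪x - xbar, y - x⟫ + ‖y - x‖ ^ 2 := by
    rw [← norm_add_sq_real, sub_add_sub_cancel']
  have hcross : ⟪x - xbar, y - x⟫ = -(⟪p, y - x⟫ + ⟪q, y - x⟫) := by
    rw [← neg_sub, hx, inner_neg_left, inner_add_left]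
  linarith [inner_sub_le_mul_sum_abs_sub hp hpx y, inner_sub_le_mul_norm_sub hq hqx y]

end Subgradient

lemma eq_of_forall_add_half_norm_sub_sq_le {E : Type*} [NormedAddCommGroup E] {f : E → ℝ}
    {x y : E} (hx : ∀ z, f x + 1 / 2 * ‖z - x‖ ^ 2 ≤ f z) (hy : ∀ z, f y ≤ f z) : y = x := by
  have h : ‖y - x‖ ^ 2 ≤ 0 := by linarith [hx y, hy x]
  exact sub_eq_zero.mp (norm_eq_zero.mp (pow_eq_zero_iff two_ne_zero |>.mp
    (le_antisymm h (sq_nonneg _))))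

/-- Sparse-group soft-thresholding (single-group case of Lemma 9): for
ρ(x) = β₁‖x‖₁ + β₂‖x‖₂ and t > 0, prox_{tρ}(x̄) = η·max(1 - tβ₂/‖η‖₂, 0) where
η = sgn(x̄) ⊙ max(|x̄| - tβ₁, 0) (and prox = 0 when η = 0): this point is the unique
minimizer of t(β₁‖y‖₁ + β₂‖y‖₂) + ½‖y - x̄‖₂². -/
theorem stmt_11 (n : ℕ) (β₁ β₂ t : ℝ) (hβ₁ : 0 < β₁) (hβ₂ : 0 < β₂) (ht : 0 < t)
    (xbar η xp : EuclideanSpace ℝ (Fin n))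
    (hη : ∀ j, η j = Real.sign (xbar j) * max (|xbar j| - t * β₁) 0)
    (hxp : xp = if η = 0 then 0 else max (1 - t * β₂ / ‖η‖) 0 • η) :
    (∀ y : EuclideanSpace ℝ (Fin n),
        t * (β₁ * ∑ j, |xp j| + β₂ * ‖xp‖) + 1 / 2 * ‖xp - xbar‖ ^ 2 ≤
          t * (β₁ * ∑ j, |y j| + β₂ * ‖y‖) + 1 / 2 * ‖y - xbar‖ ^ 2) ∧
      ∀ y : EuclideanSpace ℝ (Fin n),
        (∀ z : EuclideanSpace ℝ (Fin n),
            t * (β₁ * ∑ j, |y j| + β₂ * ‖y‖) + 1 / 2 * ‖y - xbar‖ ^ 2 ≤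
              t * (β₁ * ∑ j, |z j| + β₂ * ‖z‖) + 1 / 2 * ‖z - xbar‖ ^ 2) → y = xp := by
  set f : EuclideanSpace ℝ (Fin n) → ℝ :=
    fun y => t * (β₁ * ∑ j, |y j| + β₂ * ‖y‖) + 1 / 2 * ‖y - xbar‖ ^ 2
  have hsoft : ∀ j, η j = softThreshold (t * β₁) (xbar j) := hη
  have hblock : xp = blockSoftThreshold (t * β₂) η := by
    rw [hxp]; split_ifs with h
    · rw [h, blockSoftThreshold_zero]
    · rfl
  have hl1_bound : ∀ j, |(xbar - η) j| ≤ t * β₁ := fun j => by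
    rw [PiLp.sub_apply, hsoft]; exact abs_sub_softThreshold_le (by positivity) _
  have hl1_eq : ∀ j, (xbar - η) j * xp j = t * β₁ * |xp j| := fun j => by
    have hc : 0 ≤ max (1 - t * β₂ / ‖η‖) 0 := le_max_right _ _
    rw [hblock, blockSoftThreshold, PiLp.sub_apply, PiLp.smul_apply, smul_eq_mul, abs_mul,
      abs_of_nonneg hc, hsoft]
    linear_combination
      max (1 - t * β₂ / ‖η‖) 0 * sub_softThreshold_mul_softThreshold (t * β₁) (xbar j)
  have hl2_bound : ‖η - xp‖ ≤ t * β₂ := by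
    rw [hblock]; exact norm_sub_blockSoftThreshold_le (by positivity) η
  have hl2_eq : ⟪η - xp, xp⟫ = t * β₂ * ‖xp‖ := by
    rw [hblock]; exact inner_sub_blockSoftThreshold _ η
  have hgrowth : ∀ y, f xp + 1 / 2 * ‖y - xp‖ ^ 2 ≤ f y := fun y => by
    have := add_half_norm_sub_sq_le_of_subgradients hl1_bound hl1_eq hl2_bound hl2_eq
      (sub_add_sub_cancel xbar η xp).symm y
    simp only [f]
    linarith
  exact ⟨fun y => (le_add_of_nonneg_right (by positivity)).trans (hgrowth y),
    fun y hy => eq_of_forall_add_half_norm_sub_sq_le hgrowth hy⟩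
end
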